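/- arXiv:1910.04745 — 5 statements merged into one kernel-verified Lean document; each statement's English description precedes it below -/
import Mathlib

section
/- If C1 is a classical cone (generated by a basis of V1) and C2 is a proper cone, then the minimal and maximal tensor products coincide: C1 ⊙ C2 = C1 ⊛ C2. -/
open scoped TensorProduct
open TensorProduct

section Defs

variable {V V' V1 V2 : Type*}
  [AddCommGroup V] [Module ℝ V] [AddCommGroup V'] [Module ℝ V']
  [AddCommGroup V1] [Module ℝ V1] [AddCommGroup V2] [Module ℝ V2]

/-- The dual cone of a set `C`: linear functionals nonnegative on `C`. -/
def dualCone (C : Set V) : Set (Module.Dual ℝ V) := {f | ∀ x ∈ C, 0 ≤ f x}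

/-- The functional `f ⊗ g` on `V1 ⊗ V2`. -/
noncomputable def pairTensor (f : Module.Dual ℝ V1) (g : Module.Dual ℝ V2) :
    Module.Dual ℝ (V1 ⊗[ℝ] V2) :=
  (TensorProduct.lid ℝ ℝ).toLinearMap ∘ₗ TensorProduct.map f g

/-- The minimal tensor product of two cones: the convex hull of the product tensors. -/
def minTensor (C1 : Set V1) (C2 : Set V2) : Set (V1 ⊗[ℝ] V2) :=
  convexHull ℝ {z | ∃ x ∈ C1, ∃ y ∈ C2, z = x ⊗ₜ[ℝ] y}

/-- The maximal tensor product of two cones: tensors nonnegative on product functionals. -/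
def maxTensor (C1 : Set V1) (C2 : Set V2) : Set (V1 ⊗[ℝ] V2) :=
  {z | ∀ f ∈ dualCone C1, ∀ g ∈ dualCone C2, 0 ≤ pairTensor f g z}

/-- A cone: a set closed under multiplication by nonnegative scalars. -/
def IsConeSet (C : Set V) : Prop := ∀ x ∈ C, ∀ a : ℝ, 0 ≤ a → a • x ∈ C

/-- Topological closedness of a subset of a finite-dimensional real vector space,
expressed through (all) linear identifications with `Fin n → ℝ`. -/
def IsClosedSet (C : Set V) : Prop := ∀ (n : ℕ) (e : V ≃ₗ[ℝ] (Fin n → ℝ)), IsClosed (e '' C)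

/-- A proper cone: convex, closed, salient and generating. -/
def IsProperCone (C : Set V) : Prop :=
  Convex ℝ C ∧ IsClosedSet C ∧ IsConeSet C ∧ C ∩ (-C) = {0} ∧ Submodule.span ℝ C = ⊤

/-- A classical cone: the set of vectors with nonnegative coordinates in some basis,
i.e. the cone generated by a basis of the space. -/
def IsClassicalCone (C : Set V) : Prop :=
  ∃ (ι : Type) (b : Module.Basis ι ℝ V), C = {x | ∀ i, 0 ≤ b.repr x i}

/-- `C'` is a retract of `C` if there are positive maps `Φ, Ψ` with `Φ ∘ Ψ = id`. -/
def IsRetractOf (C' : Set V') (C : Set V) : Prop :=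
  ∃ (Φ : V →ₗ[ℝ] V') (Ψ : V' →ₗ[ℝ] V),
    (∀ x ∈ C, Φ x ∈ C') ∧ (∀ y ∈ C', Ψ y ∈ C) ∧ Φ ∘ₗ Ψ = LinearMap.id

/-- A polyhedral cone: the conical hull of finitely many vectors. -/
def IsPolyhedralCone (C : Set V) : Prop :=
  ∃ (k : ℕ) (v : Fin k → V),
    C = {x | ∃ c : Fin k → ℝ, (∀ i, 0 ≤ c i) ∧ x = ∑ i, c i • v i}

end Defs

/-! Expand `z ∈ C1 ⊛ C2` in the basis `b` generating `C1` as `z = ∑ i, b i ⊗ zᵢ`. For `g ∈ C2*`,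
`g zᵢ = (b.coord i ⊗ g) z ≥ 0` because `b.coord i ∈ C1*`; since `C2` is a closed convex cone, the
bipolar theorem (Hahn–Banach) gives `zᵢ ∈ C2`, so `z` is a sum of product tensors of `C1 ⊙ C2`. -/

open Module Pointwise

section Cones

variable {V : Type*} [AddCommGroup V] [Module ℝ V]

lemma IsConeSet.mem_dualCone_of_forall_lt {C : Set V} (hC : IsConeSet C) {f : Dual ℝ V} {u : ℝ}
    (hf : ∀ x ∈ C, u < f x) : f ∈ dualCone C := by
  intro x hx
  by_contra! hneg
  set t := (|u| + 1) / -f x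
  have ht : 0 ≤ t := div_nonneg (by positivity) (by linarith)
  have hft : f (t • x) = -(|u| + 1) := by
    rw [map_smul, smul_eq_mul, div_mul_eq_mul_div, div_neg, mul_div_cancel_right₀ _ hneg.ne]
  have := hf _ (hC x hx t ht)
  rw [hft] at this
  linarith [neg_abs_le u]

lemma mem_of_forall_dualCone_nonneg [FiniteDimensional ℝ V] {C : Set V} (hconv : Convex ℝ C)
    (hclosed : IsClosedSet C) (hcone : IsConeSet C) (h0 : (0 : V) ∈ C) {y : V}
    (hy : ∀ g ∈ dualCone C, 0 ≤ g y) : y ∈ C := by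
  by_contra hyC
  let e : V ≃ₗ[ℝ] (Fin (finrank ℝ V) → ℝ) := (finBasis ℝ V).equivFun
  have hey : e y ∉ e '' C := fun ⟨x, hx, hxy⟩ => hyC (e.injective hxy ▸ hx)
  obtain ⟨f, u, hfy, hfC⟩ :=
    geometric_hahn_banach_point_closed (hconv.linear_image e.toLinearMap) (hclosed _ e) hey
  let g : Dual ℝ V := f.toLinearMap ∘ₗ e.toLinearMap
  have hg : g ∈ dualCone C := hcone.mem_dualCone_of_forall_lt fun x hx => hfC _ ⟨x, hx, rfl⟩
  have hu : u < 0 := by simpa using hfC _ ⟨0, h0, rfl⟩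
  have : 0 ≤ f (e y) := hy g hg
  linarith

lemma IsConeSet.convexHull {S : Set V} (hS : IsConeSet S) : IsConeSet (convexHull ℝ S) := by
  intro x hx a ha
  have hsub : a • S ⊆ S := by
    rintro _ ⟨z, hz, rfl⟩
    exact hS z hz a ha
  exact convexHull_mono hsub (convexHull_smul a S ▸ Set.smul_mem_smul_set hx)

lemma IsConeSet.add_mem_of_convex {K : Set V} (hK : IsConeSet K) (hconv : Convex ℝ K) {x y : V}
    (hx : x ∈ K) (hy : y ∈ K) : x + y ∈ K := by
  have := hconv (hK x hx 2 zero_le_two) (hK y hy 2 zero_le_two) (by norm_num : (0 : ℝ) ≤ 1 / 2)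
    (by norm_num : (0 : ℝ) ≤ 1 / 2) (by norm_num)
  rwa [smul_smul, smul_smul, show (1 / 2 : ℝ) * 2 = 1 by norm_num, one_smul, one_smul] at this

end Cones

section Classical

variable {ι V : Type*} [AddCommGroup V] [Module ℝ V] (b : Basis ι ℝ V)

lemma isConeSet_basisCone : IsConeSet {x | ∀ i, 0 ≤ b.repr x i} := by
  intro x hx a ha i
  simpa using mul_nonneg ha (hx i)

lemma basis_mem_basisCone (i : ι) : b i ∈ {x | ∀ i, 0 ≤ b.repr x i} := by
  classical
  intro j
  simp [Finsupp.single_apply, ite_nonneg zero_le_one le_rfl]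

lemma coord_mem_dualCone_basisCone (i : ι) : b.coord i ∈ dualCone {x | ∀ i, 0 ≤ b.repr x i} :=
  fun _ hx => hx i

end Classical

section Tensor

variable {ι V1 V2 : Type*} [AddCommGroup V1] [Module ℝ V1] [AddCommGroup V2] [Module ℝ V2]

@[simp]
lemma pairTensor_tmul (f : Dual ℝ V1) (g : Dual ℝ V2) (x : V1) (y : V2) :
    pairTensor f g (x ⊗ₜ y) = f x * g y := by
  simp [pairTensor]

lemma minTensor_subset_maxTensor (C1 : Set V1) (C2 : Set V2) :
    minTensor C1 C2 ⊆ maxTensor C1 C2 := by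
  intro z hz f hf g hg
  refine convexHull_min ?_ ((convex_Ici 0).linear_preimage (pairTensor f g)) hz
  rintro _ ⟨x, hx, y, hy, rfl⟩
  simpa using mul_nonneg (hf x hx) (hg y hy)

lemma isConeSet_productTensors {C1 : Set V1} (hC1 : IsConeSet C1) (C2 : Set V2) :
    IsConeSet {z : V1 ⊗[ℝ] V2 | ∃ x ∈ C1, ∃ y ∈ C2, z = x ⊗ₜ y} := by
  rintro _ ⟨x, hx, y, hy, rfl⟩ a ha
  exact ⟨a • x, hC1 x hx a ha, y, hy, smul_tmul' a x y⟩

lemma sum_tmul_mem_minTensor {C1 : Set V1} {C2 : Set V2} (hC1 : IsConeSet C1)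
    (h01 : (0 : V1) ∈ C1) (h02 : (0 : V2) ∈ C2) (s : Finset ι) {x : ι → V1} {y : ι → V2}
    (hx : ∀ i ∈ s, x i ∈ C1) (hy : ∀ i ∈ s, y i ∈ C2) :
    ∑ i ∈ s, x i ⊗ₜ y i ∈ minTensor C1 C2 := by
  have hcone := (isConeSet_productTensors hC1 C2).convexHull
  refine Finset.sum_induction _ (· ∈ minTensor C1 C2)
    (fun _ _ => hcone.add_mem_of_convex (convex_convexHull ℝ _)) ?_
    (fun i hi => subset_convexHull ℝ _ ⟨x i, hx i hi, y i, hy i hi, rfl⟩)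
  exact subset_convexHull ℝ _ ⟨0, h01, 0, h02, (zero_tmul V1 (0 : V2)).symm⟩

lemma sum_tmul_equivFinsuppOfBasisLeft [Fintype ι] [DecidableEq ι] (b : Basis ι ℝ V1)
    (z : V1 ⊗[ℝ] V2) :
    ∑ i, b i ⊗ₜ equivFinsuppOfBasisLeft b z i = z := by
  conv_rhs => rw [← (equivFinsuppOfBasisLeft b).symm_apply_apply z]
  rw [equivFinsuppOfBasisLeft_symm_apply, Finsupp.sum_fintype _ _ (by simp)]

lemma pairTensor_coord_apply [DecidableEq ι] (b : Basis ι ℝ V1) (i : ι) (g : Dual ℝ V2)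
    (z : V1 ⊗[ℝ] V2) :
    pairTensor (b.coord i) g z = g (equivFinsuppOfBasisLeft b z i) := by
  induction z with
  | zero => simp
  | tmul x y => simp
  | add z w hz hw => simp [hz, hw]

end Tensor

/-- If `C1` is a classical cone and `C2` is a proper cone, then the minimal and
maximal tensor products coincide. -/
theorem stmt0 {V1 V2 : Type*} [AddCommGroup V1] [Module ℝ V1] [FiniteDimensional ℝ V1]
    [AddCommGroup V2] [Module ℝ V2] [FiniteDimensional ℝ V2]
    (C1 : Set V1) (C2 : Set V2)
    (h1 : IsClassicalCone C1) (h2 : IsProperCone C2) :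
    minTensor C1 C2 = maxTensor C1 C2 := by
  classical
  obtain ⟨ι, b, rfl⟩ := h1
  obtain ⟨hconv, hclosed, hcone, hsalient, -⟩ := h2
  have : Fintype ι := FiniteDimensional.fintypeBasisIndex b
  have h02 : (0 : V2) ∈ C2 := (hsalient.symm.subset rfl).1
  refine (minTensor_subset_maxTensor _ _).antisymm fun z hz => ?_
  rw [← sum_tmul_equivFinsuppOfBasisLeft b z]
  refine sum_tmul_mem_minTensor (isConeSet_basisCone b) (fun i => by simp) h02 _
    (fun i _ => basis_mem_basisCone b i) fun i _ => ?_
  refine mem_of_forall_dualCone_nonneg hconv hclosed hcone h02 fun g hg => ?_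
  rw [← pairTensor_coord_apply]
  exact hz _ (coord_mem_dualCone_basisCone b i) g hg
end

section
/- For proper cones C1 and C2, the dual of the minimal tensor product equals the maximal tensor product of the duals: (C1 ⊙ C2)* = C1* ⊛ C2*. -/
open scoped TensorProduct
open TensorProduct

/-!
Both sides consist of the functionals `φ` with `0 ≤ φ (x ⊗ y)` for all `x ∈ C1`, `y ∈ C2`.
For the dual of the minimal tensor product this holds because a half-space containing the
product tensors contains their convex hull. For the maximal tensor product of the duals it is
the bipolar theorem: by Hahn–Banach separation of a point from a closed convex cone, `C**` is the
image of `C` under evaluation, so the product functionals `F ⊗ G` with `F ∈ C1**`, `G ∈ C2**`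
are exactly the evaluations at `x ⊗ y`.
-/

section Duality

variable {V : Type*} [AddCommGroup V] [Module ℝ V]

lemma dualCone_convexHull (s : Set V) : dualCone (convexHull ℝ s) = dualCone s := by
  ext f
  exact ⟨fun hf x hx ↦ hf x (subset_convexHull ℝ s hx),
    fun hf ↦ convexHull_min hf (convex_halfSpace_ge f.isLinear 0)⟩

lemma IsProperCone.zero_mem {C : Set V} (h : IsProperCone C) : (0 : V) ∈ C :=
  (h.2.2.2.1 ▸ Set.mem_singleton 0 : (0 : V) ∈ C ∩ -C).1

lemma IsConeSet.nonpos_of_forall_lt {C : Set V} (hC : IsConeSet C) (f : Module.Dual ℝ V)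
    {u : ℝ} (hu : ∀ x ∈ C, f x < u) {x : V} (hx : x ∈ C) : f x ≤ 0 := by
  by_contra! hfx
  have := hu ((|u| / f x) • x) (hC x hx _ (by positivity))
  rw [map_smul, smul_eq_mul, div_mul_cancel₀ _ hfx.ne'] at this
  exact (le_abs_self u).not_gt this

theorem exists_mem_dualCone_neg_of_notMem [FiniteDimensional ℝ V] {C : Set V}
    (hconv : Convex ℝ C) (hclosed : IsClosedSet C) (hcone : IsConeSet C) (h0 : (0 : V) ∈ C)
    {x : V} (hx : x ∉ C) : ∃ f ∈ dualCone C, f x < 0 := by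
  let e := (Module.finBasis ℝ V).equivFun
  obtain ⟨f, u, hfC, hfx⟩ := geometric_hahn_banach_closed_point
    (hconv.linear_image e.toLinearMap) (hclosed _ e) (e.injective.mem_set_image.not.2 hx)
  let g : Module.Dual ℝ V := f.toLinearMap ∘ₗ e.toLinearMap
  have hgC : ∀ y ∈ C, g y < u := fun y hy ↦ hfC (e y) (Set.mem_image_of_mem e hy)
  have hu : 0 < u := by simpa [g] using hgC 0 h0
  refine ⟨-g, fun y hy ↦ ?_, ?_⟩
  · simpa using hcone.nonpos_of_forall_lt g hgC hy
  · simpa [g] using hu.trans hfx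

theorem dualCone_dualCone [FiniteDimensional ℝ V] {C : Set V}
    (hconv : Convex ℝ C) (hclosed : IsClosedSet C) (hcone : IsConeSet C) (h0 : (0 : V) ∈ C) :
    dualCone (dualCone C) = Module.Dual.eval ℝ V '' C := by
  ext F
  obtain ⟨x, rfl⟩ := (Module.evalEquiv ℝ V).surjective F
  refine ⟨fun hF ↦ ⟨x, ?_, rfl⟩, ?_⟩
  · by_contra hx
    obtain ⟨f, hf, hfx⟩ := exists_mem_dualCone_neg_of_notMem hconv hclosed hcone h0 hx
    exact (hF f hf).not_gt hfx
  · rintro ⟨y, hy, hyx⟩ f hf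
    simpa [← hyx] using hf y hy

lemma IsProperCone.dualCone_dualCone [FiniteDimensional ℝ V] {C : Set V} (h : IsProperCone C) :
    dualCone (dualCone C) = Module.Dual.eval ℝ V '' C :=
  _root_.dualCone_dualCone h.1 h.2.1 h.2.2.1 h.zero_mem

end Duality

section Tensor

variable {V1 V2 : Type*} [AddCommGroup V1] [Module ℝ V1] [AddCommGroup V2] [Module ℝ V2]

lemma mem_dualCone_minTensor_iff {C1 : Set V1} {C2 : Set V2} {φ : Module.Dual ℝ (V1 ⊗[ℝ] V2)} :
    φ ∈ dualCone (minTensor C1 C2) ↔ ∀ x ∈ C1, ∀ y ∈ C2, 0 ≤ φ (x ⊗ₜ y) := by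
  rw [minTensor, dualCone_convexHull]
  exact ⟨fun h x hx y hy ↦ h _ ⟨x, hx, y, hy, rfl⟩, fun h _ ⟨x, hx, y, hy, hz⟩ ↦ hz ▸ h x hx y hy⟩

variable [FiniteDimensional ℝ V1] [FiniteDimensional ℝ V2]

lemma dualDistribEquiv_apply_tmul (z : Module.Dual ℝ V1 ⊗[ℝ] Module.Dual ℝ V2) (x : V1) (y : V2) :
    dualDistribEquiv ℝ V1 V2 z (x ⊗ₜ y) =
      pairTensor (Module.Dual.eval ℝ V1 x) (Module.Dual.eval ℝ V2 y) z := by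
  induction z using TensorProduct.induction_on with
  | zero => simp
  | tmul f g => simp [pairTensor]
  | add a b ha hb => simp only [map_add, LinearMap.add_apply, ha, hb]

lemma mem_maxTensor_dualCone_iff {C1 : Set V1} {C2 : Set V2}
    (h1 : IsProperCone C1) (h2 : IsProperCone C2) {z : Module.Dual ℝ V1 ⊗[ℝ] Module.Dual ℝ V2} :
    z ∈ maxTensor (dualCone C1) (dualCone C2) ↔
      ∀ x ∈ C1, ∀ y ∈ C2, 0 ≤ dualDistribEquiv ℝ V1 V2 z (x ⊗ₜ y) := by
  simp only [maxTensor, h1.dualCone_dualCone, h2.dualCone_dualCone, Set.forall_mem_image,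
    dualDistribEquiv_apply_tmul, Set.mem_ofPred_eq]

end Tensor

/-- For proper cones, the dual of the minimal tensor product equals the maximal
tensor product of the duals, under the identification of `(V1 ⊗ V2)*` with
`V1* ⊗ V2*`. -/
theorem stmt2 {V1 V2 : Type*} [AddCommGroup V1] [Module ℝ V1] [FiniteDimensional ℝ V1]
    [AddCommGroup V2] [Module ℝ V2] [FiniteDimensional ℝ V2]
    (C1 : Set V1) (C2 : Set V2)
    (h1 : IsProperCone C1) (h2 : IsProperCone C2) :
    dualCone (minTensor C1 C2) =
      (TensorProduct.dualDistribEquiv ℝ V1 V2) '' maxTensor (dualCone C1) (dualCone C2) := by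
  ext φ
  obtain ⟨z, rfl⟩ := (dualDistribEquiv ℝ V1 V2).surjective φ
  rw [(dualDistribEquiv ℝ V1 V2).injective.mem_set_image, mem_dualCone_minTensor_iff,
    mem_maxTensor_dualCone_iff h1 h2]
end

section
/- Strict CHSH inequality for the blunt square: if (x1, y1) and (x2, y2) both lie in S = [−1,1]² \ {−1,1}² (the unit square with its four corners removed), then x1·x2 + x1·y2 + y1·x2 − y1·y2 < 2. -/
lemma chsh_aux (p q r s : ℝ) (hp : |p| < 1) (hq : |q| ≤ 1)
    (hr : |r| ≤ 1) (hs : |s| ≤ 1) (h2 : |r| < 1 ∨ |s| < 1) :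
    p * r + p * s + q * r - q * s < 2 := by
  by_cases ha : r + s = 0
  · have hs' : s = -r := by linarith
    subst hs'
    have hrlt : |r| < 1 := by
      rcases h2 with h | h
      · exact h
      · rwa [abs_neg] at h
    have hqr : q * r ≤ |r| := by
      calc q * r ≤ |q * r| := le_abs_self _
        _ = |q| * |r| := abs_mul q r
        _ ≤ |r| := mul_le_of_le_one_left (abs_nonneg r) hq
    nlinarith [hqr, hrlt]
  · have ha' : (0:ℝ) < |r + s| := abs_pos.mpr ha
    have h1 : p * (r + s) ≤ |p| * |r + s| := by
      calc p * (r + s) ≤ |p * (r + s)| := le_abs_self _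
        _ = |p| * |r + s| := abs_mul _ _
    have h3 : |p| * |r + s| < |r + s| := mul_lt_of_lt_one_left ha' hp
    have hb : q * (r - s) ≤ |r - s| := by
      calc q * (r - s) ≤ |q * (r - s)| := le_abs_self _
        _ = |q| * |r - s| := abs_mul _ _
        _ ≤ |r - s| := mul_le_of_le_one_left (abs_nonneg _) hq
    have hr' := abs_le.mp hr
    have hs'' := abs_le.mp hs
    have hsum : |r + s| + |r - s| ≤ 2 := by
      rcases abs_cases (r + s) with ⟨e1, _⟩ | ⟨e1, _⟩ <;>
        rcases abs_cases (r - s) with ⟨e2, _⟩ | ⟨e2, _⟩ <;> linarith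
    nlinarith [h1, h3, hb, hsum]

/-- Strict CHSH inequality for the blunt square: if `(x1, y1)` and `(x2, y2)` lie in
`S = [−1,1]² \ {−1,1}²` (the unit square with its corners removed), then
`x1*x2 + x1*y2 + y1*x2 − y1*y2 < 2`. -/
theorem stmt8 (x1 y1 x2 y2 : ℝ)
    (hx1 : |x1| ≤ 1) (hy1 : |y1| ≤ 1) (h1 : ¬(|x1| = 1 ∧ |y1| = 1))
    (hx2 : |x2| ≤ 1) (hy2 : |y2| ≤ 1) (h2 : ¬(|x2| = 1 ∧ |y2| = 1)) :
    x1 * x2 + x1 * y2 + y1 * x2 - y1 * y2 < 2 := by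
  rw [not_and_or] at h1 h2
  have h2' : |x2| < 1 ∨ |y2| < 1 := by
    rcases h2 with h | h
    · exact Or.inl (lt_of_le_of_ne hx2 h)
    · exact Or.inr (lt_of_le_of_ne hy2 h)
  rcases h1 with h1 | h1
  · have hp : |x1| < 1 := lt_of_le_of_ne hx1 h1
    exact chsh_aux x1 y1 x2 y2 hp hy1 hx2 hy2 h2'
  · have hp : |y1| < 1 := lt_of_le_of_ne hy1 h1
    have h2'' : |x2| < 1 ∨ |(-y2)| < 1 := by rwa [abs_neg]
    have := chsh_aux y1 x1 x2 (-y2) hp hx1 hx2 (by rwa [abs_neg]) h2''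
    nlinarith [this]
end

section
/- Any facet of a proper polyhedral cone is a retract of it: if F is a facet of a proper polyhedral cone C ⊆ V, then there exist a linear map Φ : V → span(F) with Φ(C) ⊆ F and the inclusion Ψ : span(F) → V, such that Φ ∘ Ψ = id on span(F). -/
open scoped TensorProduct
open TensorProduct

/-- A face of a convex set: a nonempty convex subset such that whenever an interior
convex combination of two points of the set lies in it, both points lie in it. -/
def IsFaceOf {V : Type*} [AddCommGroup V] [Module ℝ V] (F C : Set V) : Prop :=
  F.Nonempty ∧ Convex ℝ F ∧ F ⊆ C ∧
    ∀ x ∈ C, ∀ y ∈ C, ∀ t : ℝ, 0 < t → t < 1 →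
      t • x + (1 - t) • y ∈ F → x ∈ F ∧ y ∈ F

/-- A facet of a cone: a face of dimension one less than the dimension of the cone. -/
def IsFacetOf {V : Type*} [AddCommGroup V] [Module ℝ V] (F C : Set V) : Prop :=
  IsFaceOf F C ∧
    Module.finrank ℝ (Submodule.span ℝ F) + 1 = Module.finrank ℝ (Submodule.span ℝ C)


/-!
A facet `F` of a convex cone `C` is exposed by a functional `f`, nonnegative on `C`, with
`ker f = span F` and `C ∩ ker f = F`: a functional with that kernel cannot change sign on `C`,
because a sign change would put a point of `F` strictly between two points of `C` off `ker f`.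
Projecting along a vector `v` with `f v = 1`, i.e. `x ↦ x - f x • v`, retracts `V` onto `span F`,
and it maps `C` into `F` once it maps each of the finitely many generators `g` of `C` into `F`.
Starting from any `v₀` with `f v₀ = 1`, the vectors `(f g)⁻¹ • (g - f g • v₀)` lie in
`ker f = span F = F - F`; as `F` is closed under addition, a single `z ∈ F` has
`z + (f g)⁻¹ • (g - f g • v₀) ∈ F` for every generator, and `v = v₀ - z` works.
-/

section PointedCone

variable {R V : Type*} [Ring R] [LinearOrder R] [IsOrderedRing R] [AddCommGroup V] [Module R V]

theorem PointedCone.exists_add_mem_of_mem_span (K : PointedCone R V) {w : V}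
    (hw : w ∈ Submodule.span R (K : Set V)) : ∃ p ∈ K, p + w ∈ K := by
  induction hw using Submodule.span_induction with
  | mem x hx => exact ⟨0, K.zero_mem, by simpa using hx⟩
  | zero => exact ⟨0, K.zero_mem, by simp⟩
  | add x y _ _ ihx ihy =>
    obtain ⟨p, hp, hpx⟩ := ihx
    obtain ⟨q, hq, hqy⟩ := ihy
    refine ⟨p + q, K.add_mem hp hq, ?_⟩
    rw [add_add_add_comm]
    exact K.add_mem hpx hqy
  | smul c x _ ih =>
    obtain ⟨p, hp, hpx⟩ := ih
    rcases le_total 0 c with hc | hc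
    · exact ⟨c • p, K.smul_mem hc hp, by rw [← smul_add]; exact K.smul_mem hc hpx⟩
    · refine ⟨(-c) • (p + x), K.smul_mem (neg_nonneg.2 hc) hpx, ?_⟩
      convert K.smul_mem (neg_nonneg.2 hc) hp using 1
      rw [smul_add, add_assoc, ← add_smul, neg_add_cancel, zero_smul, add_zero]

theorem PointedCone.exists_forall_add_mem_of_mem_span (K : PointedCone R V) {ι : Type*}
    [Fintype ι] {w : ι → V} (hw : ∀ i, w i ∈ Submodule.span R (K : Set V)) :
    ∃ z ∈ K, ∀ i, z + w i ∈ K := by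
  classical
  choose p hp hpw using fun i => K.exists_add_mem_of_mem_span (hw i)
  refine ⟨∑ i, p i, K.sum_mem fun i _ => hp i, fun i => ?_⟩
  rw [← Finset.add_sum_erase _ p (Finset.mem_univ i), add_right_comm]
  exact K.add_mem (hpw i) (K.sum_mem fun j _ => hp j)

end PointedCone

theorem Module.Dual.exists_ker_eq {K V : Type*} [DivisionRing K] [AddCommGroup V] [Module K V]
    [FiniteDimensional K V] {W : Submodule K V} (hW : Module.finrank K W + 1 = Module.finrank K V) :
    ∃ f : Module.Dual K V, LinearMap.ker f = W := by
  have hWtop : W < ⊤ := lt_top_iff_ne_top.2 fun h => by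
    rw [h, finrank_top] at hW
    omega
  obtain ⟨f, hf, hWf⟩ := Submodule.exists_dual_map_eq_bot_of_lt_top hWtop inferInstance
  refine ⟨f, (Submodule.eq_of_le_of_finrank_le (LinearMap.le_ker_iff_map.2 hWf) ?_).symm⟩
  have := Module.Dual.finrank_ker_add_one_of_ne_zero hf
  omega

theorem Module.Dual.exists_retraction_of_ker_eq {K V : Type*} [Field K] [AddCommGroup V]
    [Module K V] {f : Module.Dual K V} {W : Submodule K V} (hker : LinearMap.ker f = W) {v : V}
    (hv : f v = 1) :
    ∃ Φ : V →ₗ[K] W, (∀ x, (Φ x : V) = x - f x • v) ∧ Φ ∘ₗ W.subtype = LinearMap.id := by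
  have hmem : ∀ x, x - f x • v ∈ W := fun x => by
    rw [← hker, LinearMap.mem_ker, map_sub, map_smul, hv, smul_eq_mul, mul_one, sub_self]
  refine ⟨(LinearMap.id - f.smulRight v).codRestrict W hmem, fun x => rfl, ?_⟩
  ext ⟨y, hy⟩
  have hfy : f y = 0 := by rwa [← hker] at hy
  show y - f y • v = y
  rw [hfy, zero_smul, sub_zero]

namespace IsFaceOf

variable {V : Type*} [AddCommGroup V] [Module ℝ V] {C F : Set V}

theorem zero_mem (hF : IsFaceOf F C) (hC : IsConeSet C) : (0 : V) ∈ F := by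
  obtain ⟨⟨x, hx⟩, -, hFC, hface⟩ := hF
  have h0 : (0 : V) ∈ C := by simpa using hC x (hFC hx) 0 le_rfl
  refine (hface _ (hC x (hFC hx) 2 zero_le_two) 0 h0 (1 / 2) (by norm_num) (by norm_num) ?_).2
  convert hx using 1
  module

theorem smul_mem (hF : IsFaceOf F C) (hC : IsConeSet C) {x : V} (hx : x ∈ F) {a : ℝ}
    (ha : 0 ≤ a) : a • x ∈ F := by
  have h0 := hF.zero_mem hC
  rcases le_or_gt a 1 with ha1 | ha1
  · simpa using hF.2.1 hx h0 ha (sub_nonneg.2 ha1) (add_sub_cancel a 1)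
  · refine (hF.2.2.2 _ (hC x (hF.2.2.1 hx) a ha) 0 (hF.2.2.1 h0) a⁻¹ (by positivity)
      (inv_lt_one_of_one_lt₀ ha1) ?_).1
    rwa [smul_zero, add_zero, inv_smul_smul₀ (by positivity)]

theorem add_mem (hF : IsFaceOf F C) (hC : IsConeSet C) {x y : V} (hx : x ∈ F) (hy : y ∈ F) :
    x + y ∈ F := by
  have hmid : (1 / 2 : ℝ) • x + (1 / 2 : ℝ) • y ∈ F :=
    hF.2.1 hx hy (by norm_num) (by norm_num) (by norm_num)
  convert hF.smul_mem hC hmid zero_le_two using 1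
  module

def toPointedCone (hF : IsFaceOf F C) (hC : IsConeSet C) : PointedCone ℝ V where
  carrier := F
  add_mem' := hF.add_mem hC
  zero_mem' := hF.zero_mem hC
  smul_mem' c _ hx := hF.smul_mem hC hx c.2

theorem mem_of_mem_span (hF : IsFaceOf F C) (hC : IsConeSet C) {x : V} (hxC : x ∈ C)
    (hxF : x ∈ Submodule.span ℝ F) : x ∈ F := by
  obtain ⟨p, hp, hpx⟩ := (hF.toPointedCone hC).exists_add_mem_of_mem_span hxF
  refine (hF.2.2.2 x hxC p (hF.2.2.1 hp) (1 / 2) (by norm_num) (by norm_num) ?_).1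
  convert hF.smul_mem hC hpx (a := 1 / 2) (by norm_num) using 1
  module

theorem nonneg_or_nonpos (hF : IsFaceOf F C) (hconv : Convex ℝ C) {f : Module.Dual ℝ V}
    (hFf : ∀ x ∈ F, f x = 0) (hCf : ∀ x ∈ C, f x = 0 → x ∈ F) :
    (∀ x ∈ C, 0 ≤ f x) ∨ (∀ x ∈ C, f x ≤ 0) := by
  by_contra! ⟨⟨x, hxC, hx⟩, ⟨y, hyC, hy⟩⟩
  set t := f y / (f y - f x)
  have ht0 : 0 < t := div_pos hy (by linarith)
  have ht1 : t < 1 := (div_lt_one (by linarith)).2 (by linarith)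
  have hz : f (t • x + (1 - t) • y) = 0 := by
    have hne : f y - f x ≠ 0 := (sub_pos.2 (hx.trans hy)).ne'
    simp only [map_add, map_smul, smul_eq_mul, t]
    field_simp
    ring
  have hzF := hCf _ (hconv hxC hyC ht0.le (by linarith) (by ring)) hz
  linarith [hFf x (hF.2.2.2 x hxC y hyC t ht0 ht1 hzF).1]

theorem exists_dual_nonneg_ker_eq_span [FiniteDimensional ℝ V] (hF : IsFaceOf F C)
    (hconv : Convex ℝ C) (hC : IsConeSet C)
    (hcodim : Module.finrank ℝ (Submodule.span ℝ F) + 1 = Module.finrank ℝ V) :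
    ∃ f : Module.Dual ℝ V, LinearMap.ker f = Submodule.span ℝ F ∧ ∀ x ∈ C, 0 ≤ f x := by
  obtain ⟨f, hker⟩ := Module.Dual.exists_ker_eq hcodim
  have hFf : ∀ x ∈ F, f x = 0 := fun x hx => by
    rw [← LinearMap.mem_ker, hker]
    exact Submodule.subset_span hx
  have hCf : ∀ x ∈ C, f x = 0 → x ∈ F := fun x hxC hx => by
    rw [← LinearMap.mem_ker, hker] at hx
    exact hF.mem_of_mem_span hC hxC hx
  rcases hF.nonneg_or_nonpos hconv hFf hCf with hpos | hneg
  · exact ⟨f, hker, hpos⟩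
  · exact ⟨-f, by rwa [LinearMap.ker_neg], fun x hx => neg_nonneg.2 (hneg x hx)⟩

end IsFaceOf

theorem IsPolyhedralCone.exists_sub_smul_mem {V : Type*} [AddCommGroup V] [Module ℝ V]
    {C : Set V} (hC : IsPolyhedralCone C) (K : PointedCone ℝ V) {f : Module.Dual ℝ V}
    (hf : f ≠ 0) (hKf : ∀ x ∈ K, f x = 0) (hCK : ∀ x ∈ C, f x = 0 → x ∈ K)
    (hker : LinearMap.ker f ≤ Submodule.span ℝ (K : Set V)) (hfC : ∀ x ∈ C, 0 ≤ f x) :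
    ∃ v, f v = 1 ∧ ∀ x ∈ C, x - f x • v ∈ K := by
  obtain ⟨k, g, rfl⟩ := hC
  have hgC : ∀ i, ∃ c : Fin k → ℝ, (∀ j, 0 ≤ c j) ∧ g i = ∑ j, c j • g j := fun i =>
    ⟨Pi.single i 1, fun j => by by_cases h : j = i <;> simp [h], by simp [Pi.single_apply]⟩
  obtain ⟨v₀, hv₀⟩ := LinearMap.surjective hf 1
  obtain ⟨z, hzK, hz⟩ := K.exists_forall_add_mem_of_mem_span (w := fun i =>
    (f (g i))⁻¹ • (g i - f (g i) • v₀)) fun i => hker (by simp [hv₀])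
  refine ⟨v₀ - z, by simp [hv₀, hKf z hzK], ?_⟩
  have hgen : ∀ i, g i - f (g i) • (v₀ - z) ∈ K := fun i => by
    rcases (hfC _ (hgC i)).eq_or_lt with hfg | hfg
    · simpa [← hfg] using hCK _ (hgC i) hfg.symm
    · convert K.smul_mem hfg.le (hz i) using 1
      rw [smul_add, smul_inv_smul₀ hfg.ne']
      module
  rintro _ ⟨c, hc, rfl⟩
  convert K.sum_mem fun i (_ : i ∈ Finset.univ) => K.smul_mem (hc i) (hgen i) using 1
  simp only [map_sum, map_smul, smul_eq_mul, Finset.sum_smul, smul_sub, Finset.sum_sub_distrib,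
    mul_smul]

/-- Any facet `F` of a proper polyhedral cone `C` is a retract of it: there is a
positive linear map `Φ : V → span F` mapping `C` into `F`, which restricts to the
identity on `span F` (i.e. `Φ` composed with the inclusion of `span F` is the identity). -/
theorem stmt9 {V : Type*} [AddCommGroup V] [Module ℝ V] [FiniteDimensional ℝ V]
    (C F : Set V) (hC : IsProperCone C) (hpoly : IsPolyhedralCone C)
    (hF : IsFacetOf F C) :
    ∃ Φ : V →ₗ[ℝ] (Submodule.span ℝ F),
      (∀ x ∈ C, (Φ x : V) ∈ F) ∧ Φ ∘ₗ (Submodule.span ℝ F).subtype = LinearMap.id := by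
  obtain ⟨hconv, -, hcone, -, hspan⟩ := hC
  obtain ⟨hface, hcodim⟩ := hF
  rw [hspan, finrank_top] at hcodim
  obtain ⟨f, hker, hfC⟩ := hface.exists_dual_nonneg_ker_eq_span hconv hcone hcodim
  have hf : f ≠ 0 := by
    rintro rfl
    rw [LinearMap.ker_zero] at hker
    rw [← hker, finrank_top] at hcodim
    omega
  obtain ⟨v, hfv, hv⟩ := hpoly.exists_sub_smul_mem (hface.toPointedCone hcone) hf
    (fun x hx => by rw [← LinearMap.mem_ker, hker]; exact Submodule.subset_span hx)
    (fun x hxC hx => hface.mem_of_mem_span hcone hxC (hker ▸ hx)) hker.le hfC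
  obtain ⟨Φ, hΦ, hΦid⟩ := Module.Dual.exists_retraction_of_ker_eq hker hfv
  exact ⟨Φ, fun x hx => (hΦ x).symm ▸ hv x hx, hΦid⟩
end

section
/- The Lorentz cone L_{2n} is a retract of PSD_{2^n}: with anticommuting trace-zero Hermitian unitaries U_1,…,U_{2n} of size 2ⁿ, the maps Φ(A) = (tr(AU_1),…,tr(AU_{2n}), tr A) and Ψ(x) = Σᵢ xᵢUᵢ + x_{2n+1}·Id satisfy Φ(PSD_{2^n}) ⊆ L_{2n}, Ψ(L_{2n}) ⊆ PSD_{2^n}, and Φ ∘ Ψ = 2ⁿ · id on ℝ^{2n+1}. -/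
/-!
If `U₁, …, U_k` are Hermitian and anticommute with `Uᵢ² = 1`, then `S = ∑ yᵢ Uᵢ` satisfies
`S² = ‖y‖² · 1`, so `(S + ‖y‖)² = 2‖y‖ (S + ‖y‖)` exhibits `S + ‖y‖` as a positive multiple of a
Gram matrix; hence `S + c` is positive semidefinite whenever `‖y‖ ≤ c`. This is `Ψ(L) ⊆ PSD`.
Dually, for `A ⪰ 0` and `y = (tr(AUᵢ))ᵢ`, pairing `A` with the positive semidefinite matrix
`‖y‖ - ∑ yᵢ Uᵢ` gives `‖y‖ tr A - ‖y‖² ≥ 0`, which is `Φ(PSD) ⊆ L`. Finally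
`tr(UᵢUⱼ) = 2ⁿ δᵢⱼ` and `tr Uᵢ = 0` give `Φ ∘ Ψ = 2ⁿ id`.
-/

open scoped ComplexOrder

/-- The Lorentz cone of parameter `r` in `ℝ^(n+1)`. -/
noncomputable def lorentz (n : ℕ) (r : ℝ) : Set (Fin (n + 1) → ℝ) :=
  {x | Real.sqrt (∑ i : Fin n, x i.castSucc ^ 2) ≤ r * x (Fin.last n)}

/-- The map `A ↦ (tr(AU₁), …, tr(AU_{2n}), tr A)`. -/
noncomputable def PhiMap (n : ℕ) (U : Fin (2 * n) → Matrix (Fin (2 ^ n)) (Fin (2 ^ n)) ℂ)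
    (A : Matrix (Fin (2 ^ n)) (Fin (2 ^ n)) ℂ) : Fin (2 * n + 1) → ℝ :=
  Fin.snoc (fun i => (Matrix.trace (A * U i)).re) (Matrix.trace A).re

/-- The map `x ↦ Σᵢ xᵢ Uᵢ + x_{2n+1} Id`. -/
noncomputable def PsiMap (n : ℕ) (U : Fin (2 * n) → Matrix (Fin (2 ^ n)) (Fin (2 ^ n)) ℂ)
    (x : Fin (2 * n + 1) → ℝ) : Matrix (Fin (2 ^ n)) (Fin (2 ^ n)) ℂ :=
  ∑ i : Fin (2 * n), x i.castSucc • U i + x (Fin.last (2 * n)) • 1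

open scoped MatrixOrder

namespace Matrix

variable {m 𝕜 : Type*} [Fintype m] [DecidableEq m] [RCLike 𝕜]

theorem PosSemidef.trace_mul_nonneg {A B : Matrix m m 𝕜} (hA : A.PosSemidef)
    (hB : B.PosSemidef) : 0 ≤ (A * B).trace := by
  have hsqrt : (CFC.sqrt A)ᴴ = CFC.sqrt A :=
    (nonneg_iff_posSemidef.mp (CFC.sqrt_nonneg A)).isHermitian.eq
  have h := hB.mul_mul_conjTranspose_same (CFC.sqrt A)
  rw [hsqrt] at h
  calc 0 ≤ (CFC.sqrt A * B * CFC.sqrt A).trace := h.trace_nonneg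
    _ = (A * B).trace := by rw [trace_mul_cycle, CFC.sqrt_mul_sqrt_self A hA.nonneg]

theorem IsHermitian.posSemidef_add_smul_one {S : Matrix m m 𝕜} (hS : S.IsHermitian) {r c : ℝ}
    (hS2 : S * S = r ^ 2 • 1) (hr : 0 ≤ r) (hrc : r ≤ c) : (S + c • 1).PosSemidef := by
  have hsplit : S + c • (1 : Matrix m m 𝕜) = (c - r) • 1 + (S + r • 1) := by module
  rw [hsplit]
  refine (PosSemidef.one.smul (sub_nonneg.2 hrc)).add ?_
  rcases hr.eq_or_lt with rfl | hr
  · have hS0 : S = 0 := by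
      rw [← conjTranspose_mul_self_eq_zero, hS.eq, hS2]
      simp
    simpa [hS0] using PosSemidef.zero
  · have hT : (S + r • 1)ᴴ = S + r • (1 : Matrix m m 𝕜) :=
      (hS.add (isHermitian_one.smul (IsSelfAdjoint.all r))).eq
    have hsq : S + r • (1 : Matrix m m 𝕜) = (2 * r)⁻¹ • ((S + r • 1)ᴴ * (S + r • 1)) := by
      rw [hT, add_mul, mul_add, mul_add, hS2]
      simp only [smul_mul_assoc, mul_smul_comm, one_mul, mul_one, smul_smul]
      match_scalars <;> field_simp <;> ring
    rw [hsq]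
    exact (posSemidef_conjTranspose_mul_self _).smul (by positivity)

theorem trace_sum_smul_add_smul_one {ι : Type*} [Fintype ι] {U : ι → Matrix m m 𝕜}
    (htr : ∀ i, (U i).trace = 0) (y : ι → ℝ) (c : ℝ) :
    (∑ i, y i • U i + c • 1).trace = c • (Fintype.card m : 𝕜) := by
  simp [trace_sum, htr]

variable {ι : Type*} [DecidableEq ι]

def IsCliffordSystem (U : ι → Matrix m m 𝕜) : Prop :=
  ∀ i j, U i * U j + U j * U i = if i = j then (2 : 𝕜) • (1 : Matrix m m 𝕜) else 0

namespace IsCliffordSystem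

variable {U : ι → Matrix m m 𝕜}

theorem trace_mul (hU : IsCliffordSystem U) (i j : ι) :
    (U i * U j).trace = if i = j then (Fintype.card m : 𝕜) else 0 := by
  have h := congrArg trace (hU i j)
  rw [trace_add, trace_mul_comm (U j)] at h
  split_ifs at h ⊢
  · rw [trace_smul, trace_one, smul_eq_mul, ← two_mul] at h
    exact mul_left_cancel₀ two_ne_zero h
  · simpa using h

variable [Fintype ι]

theorem sum_smul_mul_self (hU : IsCliffordSystem U) (y : ι → ℝ) :
    (∑ i, y i • U i) * (∑ i, y i • U i) = (∑ i, y i ^ 2) • 1 := by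
  have hexpand : (∑ i, y i • U i) * (∑ i, y i • U i) = ∑ i, ∑ j, (y i * y j) • (U i * U j) := by
    simp only [Finset.sum_mul_sum, smul_mul_smul_comm]
  have hswap : ∑ i, ∑ j, (y i * y j) • (U i * U j) = ∑ i, ∑ j, (y i * y j) • (U j * U i) := by
    rw [Finset.sum_comm]
    exact Finset.sum_congr rfl fun i _ => Finset.sum_congr rfl fun j _ => by rw [mul_comm]
  have htwice : (2 : ℝ) • ((∑ i, y i • U i) * (∑ i, y i • U i)) = (2 : ℝ) • ((∑ i, y i ^ 2) • 1) :=
    calc (2 : ℝ) • ((∑ i, y i • U i) * (∑ i, y i • U i))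
        = ∑ i, ∑ j, (y i * y j) • (U i * U j + U j * U i) := by
          rw [two_smul, hexpand]
          nth_rewrite 2 [hswap]
          simp only [smul_add, Finset.sum_add_distrib]
      _ = ∑ i, (y i * y i) • (2 : 𝕜) • (1 : Matrix m m 𝕜) := by
          simp only [hU _ _, smul_ite, smul_zero, Finset.sum_ite_eq, Finset.mem_univ, if_true]
      _ = (2 : ℝ) • ((∑ i, y i ^ 2) • 1) := by
          simp only [← Finset.sum_smul, sq]
          module
  exact smul_right_injective _ two_ne_zero htwice

theorem posSemidef_sum_smul_add_smul_one (hU : IsCliffordSystem U)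
    (hherm : ∀ i, (U i).IsHermitian) (y : ι → ℝ) {c : ℝ} (hc : √(∑ i, y i ^ 2) ≤ c) :
    (∑ i, y i • U i + c • 1).PosSemidef := by
  have hS : (∑ i, y i • U i).IsHermitian :=
    isSelfAdjoint_sum _ fun i _ => (hherm i).smul (IsSelfAdjoint.all (y i))
  refine hS.posSemidef_add_smul_one ?_ (Real.sqrt_nonneg _) hc
  rw [hU.sum_smul_mul_self, Real.sq_sqrt (Finset.sum_nonneg fun i _ => sq_nonneg (y i))]

theorem trace_sum_smul_add_smul_one_mul (hU : IsCliffordSystem U) (htr : ∀ i, (U i).trace = 0)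
    (y : ι → ℝ) (c : ℝ) (j : ι) :
    ((∑ i, y i • U i + c • 1) * U j).trace = y j • (Fintype.card m : 𝕜) := by
  simp [add_mul, Finset.sum_mul, trace_sum, hU.trace_mul, htr]

theorem sqrt_sum_sq_re_trace_mul_le {U : ι → Matrix m m ℂ} (hU : IsCliffordSystem U)
    (hherm : ∀ i, (U i).IsHermitian) {A : Matrix m m ℂ} (hA : A.PosSemidef) :
    √(∑ i, (A * U i).trace.re ^ 2) ≤ A.trace.re := by
  set y : ι → ℝ := fun i => (A * U i).trace.re
  set r := √(∑ i, y i ^ 2)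
  have hr : 0 ≤ r := Real.sqrt_nonneg _
  have hr2 : r ^ 2 = ∑ i, y i ^ 2 := Real.sq_sqrt (Finset.sum_nonneg fun i _ => sq_nonneg (y i))
  have hM : (∑ i, (-y i) • U i + r • 1).PosSemidef :=
    hU.posSemidef_sum_smul_add_smul_one hherm _ (by simp [r])
  have hpair : (A * (∑ i, (-y i) • U i + r • 1)).trace.re = r * A.trace.re - r ^ 2 := by
    simp [mul_add, Finset.mul_sum, trace_sum, hr2, y, sq, sub_eq_neg_add]
  have hpair_nonneg : 0 ≤ (A * (∑ i, (-y i) • U i + r • 1)).trace.re :=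
    (Complex.nonneg_iff.mp (hA.trace_mul_nonneg hM)).1
  have htrA : 0 ≤ A.trace.re := (Complex.nonneg_iff.mp hA.trace_nonneg).1
  nlinarith

end IsCliffordSystem

end Matrix

/-- The Lorentz cone `L_{2n}` is a retract of `PSD_{2^n}`: given anticommuting trace-zero
Hermitian unitaries `U₁, …, U_{2n}` of size `2^n`, the maps `Φ(A) = (tr(AU₁),…,tr(AU_{2n}),tr A)`
and `Ψ(x) = Σᵢ xᵢUᵢ + x_{2n+1}·Id` satisfy `Φ(PSD) ⊆ L_{2n}`, `Ψ(L_{2n}) ⊆ PSD`, and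
`Φ ∘ Ψ = 2^n · id`. -/
theorem stmt15 (n : ℕ) (U : Fin (2 * n) → Matrix (Fin (2 ^ n)) (Fin (2 ^ n)) ℂ)
    (hherm : ∀ i, (U i).IsHermitian)
    (htr : ∀ i, Matrix.trace (U i) = 0)
    (hanti : ∀ i j, U i * U j + U j * U i =
      if i = j then (2 : ℂ) • (1 : Matrix (Fin (2 ^ n)) (Fin (2 ^ n)) ℂ) else 0) :
    (∀ A : Matrix (Fin (2 ^ n)) (Fin (2 ^ n)) ℂ, A.PosSemidef →
        PhiMap n U A ∈ lorentz (2 * n) 1) ∧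
    (∀ x ∈ lorentz (2 * n) 1, (PsiMap n U x).PosSemidef) ∧
    (∀ x : Fin (2 * n + 1) → ℝ, PhiMap n U (PsiMap n U x) = ((2 : ℝ) ^ n) • x) := by
  have hU : Matrix.IsCliffordSystem U := hanti
  refine ⟨fun A hA => ?_, fun x hx => ?_, fun x => funext fun j => ?_⟩
  · simpa [lorentz, PhiMap] using hU.sqrt_sum_sq_re_trace_mul_le hherm hA
  · exact hU.posSemidef_sum_smul_add_smul_one hherm _ (by simpa [lorentz] using hx)
  · induction j using Fin.lastCases with
    | last =>
      simp [PhiMap, PsiMap, Matrix.trace_sum_smul_add_smul_one htr, ← Complex.ofReal_ofNat,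
        ← Complex.ofReal_pow, mul_comm]
    | cast j =>
      simp [PhiMap, PsiMap, hU.trace_sum_smul_add_smul_one_mul htr, ← Complex.ofReal_ofNat,
        ← Complex.ofReal_pow, mul_comm]
end
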